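/- Let 1 ≤ n ≤ N. For U Haar-distributed in the unitary group U(N), the expected value of |Det_n(U)|², where Det_n(U) is the determinant of the upper-left n×n block of U, equals n!(N−n)!/N!. -/

import Mathlib

open MeasureTheory

namespace RandomImmanants

/-- The Borel/pi measurable structure on square complex matrices. -/
noncomputable instance (N : ℕ) : MeasurableSpace (Matrix (Fin N) (Fin N) ℂ) :=
  inferInstanceAs (MeasurableSpace (Fin N → Fin N → ℂ))

/-- The Borel/pi measurable structure on square real matrices. -/
instance (N : ℕ) : MeasurableSpace (Matrix (Fin N) (Fin N) ℝ) :=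
  inferInstanceAs (MeasurableSpace (Fin N → Fin N → ℝ))

/-- The `i`-th largest part (0-indexed) of a partition; `0` beyond its length. -/
def partNth {n : ℕ} (γ : Nat.Partition n) (i : ℕ) : ℕ :=
  ((γ.parts.sort (· ≤ ·)).reverse).getD i 0

/-- The number of colorings `g : {0,…,m-1} → {0,…,m-1}` that are constant on the cycles
of `π` and whose color class sizes are prescribed by `β` (this is the evaluation of the
complete homogeneous symmetric function `h_β` against the power sum `p_μ`, `μ` the cycle
type of `π`; a negative entry of `β` gives `0`). -/
def etaChar {m : ℕ} (β : Fin m → ℤ) (π : Equiv.Perm (Fin m)) : ℤ :=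
  ((Finset.univ.filter fun g : Fin m → Fin m =>
    g ∘ π = g ∧ ∀ i : Fin m,
      (((Finset.univ.filter fun k => g k = i).card : ℤ) = β i)).card : ℤ)

/-- The irreducible character `χ_γ` of the symmetric group `S_m` labelled by the partition
`γ ⊢ m`, via the Jacobi–Trudi determinantal formula `χ_γ = det (h_{γ_i - i + j})_{1 ≤ i,j ≤ m}`
applied to power sums. -/
def chiChar {m : ℕ} (γ : Nat.Partition m) (π : Equiv.Perm (Fin m)) : ℤ :=
  ∑ σ : Equiv.Perm (Fin m),
    ((Equiv.Perm.sign σ : ℤˣ) : ℤ) *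
      etaChar (fun i => (partNth γ i : ℤ) + ((σ i : ℕ) : ℤ) - ((i : ℕ) : ℤ)) π

/-- The partition `2λ = (2λ₁, 2λ₂, …)` of `2n` obtained by doubling each part of `λ ⊢ n`. -/
def doublePart {n : ℕ} (lam : Nat.Partition n) : Nat.Partition (2 * n) where
  parts := lam.parts.map (fun a => 2 * a)
  parts_pos := by
    intro i hi
    obtain ⟨a, ha, rfl⟩ := Multiset.mem_map.mp hi
    have := lam.parts_pos ha
    omega
  parts_sum := by
    have h : (lam.parts.map fun a => 2 * a).sum = 2 * lam.parts.sum := by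
      simpa using Multiset.sum_map_mul_left (a := (2 : ℕ)) (f := fun a => a) (s := lam.parts)
    rw [h, lam.parts_sum]

/-- The partition `(1ⁿ)` of `n`. -/
def onesPart (n : ℕ) : Nat.Partition n where
  parts := Multiset.replicate n 1
  parts_pos := by
    intro i hi
    rw [Multiset.eq_of_mem_replicate hi]
    exact one_pos
  parts_sum := by simp

/-- Letters `{1,…,2n}` (0-indexed: `{0,…,2n-1}`) as pairs: `(k, r) ↦ 2k + r`, so the
1-indexed letter `2k-1` (odd) is `(k-1, 0)` and the letter `2k` (even) is `(k-1, 1)`. -/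
def pairEquiv (n : ℕ) : Fin n × Fin 2 ≃ Fin (2 * n) where
  toFun x := ⟨2 * (x.1 : ℕ) + (x.2 : ℕ), by have h1 := x.1.isLt; have h2 := x.2.isLt; omega⟩
  invFun i := (⟨(i : ℕ) / 2, by have := i.isLt; omega⟩, ⟨(i : ℕ) % 2, by omega⟩)
  left_inv := by
    rintro ⟨⟨a, ha⟩, ⟨b, hb⟩⟩
    simp only [Prod.mk.injEq]
    constructor <;> exact Fin.ext (by simp; omega)
  right_inv := by
    rintro ⟨v, hv⟩
    exact Fin.ext (by simp; omega)

/-- The fixed-point free involution `p = (1 2)(3 4)⋯(2n-1 2n)` of `{1,…,2n}`. -/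
def pairSwap (n : ℕ) : Equiv.Perm (Fin (2 * n)) :=
  (pairEquiv n).permCongr (Equiv.prodCongr (Equiv.refl (Fin n)) (Equiv.swap 0 1))

/-- For `π ∈ S_n`, the permutation `π_o ∈ S_{2n}` acting on the odd letters:
`π_o(2k-1) = 2π(k)-1` and `π_o(2k) = 2k` (1-indexed). -/
def toOdd {n : ℕ} (π : Equiv.Perm (Fin n)) : Equiv.Perm (Fin (2 * n)) :=
  (pairEquiv n).permCongr
    (Equiv.prodCongrLeft fun r : Fin 2 => if r = 0 then π else Equiv.refl (Fin n))

/-- For `π ∈ S_n`, the permutation `π_e ∈ S_{2n}` acting on the even letters: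
`π_e(2k) = 2π(k)` and `π_e(2k-1) = 2k-1` (1-indexed). -/
def toEven {n : ℕ} (π : Equiv.Perm (Fin n)) : Equiv.Perm (Fin (2 * n)) :=
  (pairEquiv n).permCongr
    (Equiv.prodCongrLeft fun r : Fin 2 => if r = 1 then π else Equiv.refl (Fin n))

/-- The hyperoctahedral group `H_n ⊂ S_{2n}`: the centralizer of the trivial matching
`{{1,2},{3,4},…,{2n-1,2n}}`, i.e. of the involution `pairSwap n`. -/
def hyperOct (n : ℕ) : Finset (Equiv.Perm (Fin (2 * n))) :=
  Finset.univ.filter fun h => h * pairSwap n = pairSwap n * h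

/-- The zonal spherical function `ω_λ` of the Gelfand pair `(S_{2n}, H_n)`:
`ω_λ(τ) = (1/|H_n|) ∑_{ξ ∈ H_n} χ_{2λ}(τξ)`. -/
noncomputable def omegaSph {n : ℕ} (lam : Nat.Partition n) (τ : Equiv.Perm (Fin (2 * n))) : ℝ :=
  (1 / ((hyperOct n).card : ℝ)) * ∑ ξ ∈ hyperOct n, (chiChar (doublePart lam) (τ * ξ) : ℝ)

/-- `g_λ = ∑_{μ ⊢ n} |C_μ| ω_λ(μ)`, written as a sum over `S_n` (the permutations of cycle
type `μ`, embedded on the odd letters, contribute `|C_μ| ω_λ(μ)`). -/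
noncomputable def gFun {n : ℕ} (lam : Nat.Partition n) : ℝ :=
  ∑ σ : Equiv.Perm (Fin n), omegaSph lam (toOdd σ)

/-- `G_{λ,γ} = ∑_{μ ⊢ n} |C_μ| ω_λ(μ) χ_γ(μ)`, written as a sum over `S_n`. -/
noncomputable def GFun {n : ℕ} (lam γ : Nat.Partition n) : ℝ :=
  ∑ σ : Equiv.Perm (Fin n), omegaSph lam (toOdd σ) * (chiChar γ σ : ℝ)

/-- `[N]_γ^{(α)} = ∏_{(i,j) ∈ γ} (N + α(j-1) - i + 1)`, the product running over the boxes
of the Young diagram of `γ` (row `i`, column `j`, 1-indexed). -/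
def polyGen (α : ℤ) (N : ℤ) {m : ℕ} (γ : Nat.Partition m) : ℤ :=
  ∏ i ∈ Finset.range m, ∏ j ∈ Finset.range (partNth γ i), (N + α * (j : ℤ) - (i : ℤ))

/-- The upper-left `n × n` block of an `N × N` matrix (junk value `0` if `n > N`). -/
def subBlock (n N : ℕ) {R : Type*} [Zero R] (U : Matrix (Fin N) (Fin N) R) :
    Matrix (Fin n) (Fin n) R := fun i j =>
  if h : (i : ℕ) < N ∧ (j : ℕ) < N then U ⟨i, h.1⟩ ⟨j, h.2⟩ else 0

/-- The permanent of a square matrix. -/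
def perMat {m : ℕ} {R : Type*} [CommRing R] (A : Matrix (Fin m) (Fin m) R) : R :=
  ∑ π : Equiv.Perm (Fin m), ∏ k : Fin m, A k (π k)

/-- The immanant `Imm_γ(A) = ∑_{π ∈ S_m} χ_γ(π) ∏_k A_{k, π(k)}`. -/
def immMat {m : ℕ} {R : Type*} [CommRing R] (γ : Nat.Partition m)
    (A : Matrix (Fin m) (Fin m) R) : R :=
  ∑ π : Equiv.Perm (Fin m), (chiChar γ π : R) * ∏ k : Fin m, A k (π k)

/-- The full cycle type of a permutation of `m` letters, a partition of `m`
(fixed points contribute parts equal to `1`). -/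
def fullCycleType {m : ℕ} [Fintype (Fin m)] (σ : Equiv.Perm (Fin m)) : Multiset ℕ :=
  σ.cycleType + Multiset.replicate (m - σ.cycleType.sum) 1

/-- Halve all multiplicities in a multiset. -/
def halfMultiset (ν : Multiset ℕ) : Multiset ℕ :=
  ∑ k ∈ ν.toFinset, Multiset.replicate (ν.count k / 2) k

/-- The coset type of `σ ∈ S_{2n}`: the connected components of the graph on `{1,…,2n}`
whose edges are the blocks of the trivial matching `t` and of `σ(t)` are exactly the
cycle-pairs of the permutation `p ∘ (σ p σ⁻¹)` (`p = pairSwap n`), each component with `2k`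
vertices producing two `k`-cycles; so the coset type is obtained by halving the multiplicities
in the full cycle type of `p * (σ * p * σ⁻¹)`. -/
def cosetTypeM (n : ℕ) (σ : Equiv.Perm (Fin (2 * n))) : Multiset ℕ :=
  halfMultiset (fullCycleType (pairSwap n * (σ * pairSwap n * σ⁻¹)))

end RandomImmanants

/-!
Let `A` be the `N × n` matrix of the first `n` columns of `U`, so `Aᴴ A = 1`. Summing `|det|²` of
the `n × n` minors `A[f, :]` over *all* row maps `f : Fin n → Fin N` gives `n! · det (Aᴴ A) = n!`:
expanding both determinants, the sum over `f` factorizes entrywise into the entries of `Aᵀ Ā`.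
Minors with a repeated row vanish, and by left invariance of Haar measure under row permutations
all minors with distinct rows have the same mean. There are `N!/(N-n)!` injective row maps, so
the mean of `|Det_n(U)|²` is `n! (N-n)!/N!`.
-/
open Finset

namespace Matrix

theorem det_submatrix_id_right_eq_sum {ι κ R : Type*} [Fintype κ] [DecidableEq κ]
    [CommRing R] (M : Matrix ι κ R) (f : κ → ι) :
    (M.submatrix f id).det
      = ∑ σ : Equiv.Perm κ, (Equiv.Perm.sign σ : R) * ∏ i, M (f i) (σ i) := by
  rw [← det_transpose, det_apply']
  rfl

theorem sum_det_submatrix_mul_det_submatrix {ι κ R : Type*} [Fintype ι] [Fintype κ]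
    [DecidableEq κ] [CommRing R] (A B : Matrix ι κ R) :
    ∑ f : κ → ι, (A.submatrix f id).det * (B.submatrix f id).det
      = (Fintype.card κ).factorial * (Aᵀ * B).det := by
  calc ∑ f : κ → ι, (A.submatrix f id).det * (B.submatrix f id).det
      = ∑ σ : Equiv.Perm κ, ∑ τ : Equiv.Perm κ,
          (Equiv.Perm.sign σ : R) * (Equiv.Perm.sign τ : R) *
            ∑ f : κ → ι, ∏ i, A (f i) (σ i) * B (f i) (τ i) := by
        simp_rw [det_submatrix_id_right_eq_sum, sum_mul_sum, mul_sum, prod_mul_distrib]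
        rw [sum_comm]
        refine sum_congr rfl fun σ _ => ?_
        rw [sum_comm]
        refine sum_congr rfl fun τ _ => sum_congr rfl fun f _ => by ring
    _ = ∑ σ : Equiv.Perm κ, (Equiv.Perm.sign σ : R) *
          ((Aᵀ * B).submatrix σ id).det := by
        simp_rw [det_submatrix_id_right_eq_sum, mul_apply, transpose_apply, Fintype.prod_sum,
          mul_sum, mul_assoc]
    _ = (Fintype.card κ).factorial * (Aᵀ * B).det := by
        simp_rw [det_permute, ← mul_assoc, ← Int.cast_mul, ← Units.val_mul, Int.units_mul_self,
          Units.val_one, Int.cast_one, one_mul, sum_const, card_univ, Fintype.card_perm,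
          nsmul_eq_mul]

theorem sum_norm_det_submatrix_sq {ι κ 𝕜 : Type*} [Fintype ι] [Fintype κ] [DecidableEq κ]
    [RCLike 𝕜] (A : Matrix ι κ 𝕜) (hA : Aᴴ * A = 1) :
    ∑ f : κ → ι, ‖(A.submatrix f id).det‖ ^ 2 = (Fintype.card κ).factorial := by
  apply RCLike.ofReal_injective (K := 𝕜)
  have hconj (f : κ → ι) : star (A.submatrix f id).det = (Aᴴᵀ.submatrix f id).det := by
    rw [← det_conjTranspose, ← det_transpose]
    rfl
  push_cast
  simp_rw [← RCLike.mul_conj, RCLike.star_def.symm, hconj, sum_det_submatrix_mul_det_submatrix,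
    ← transpose_mul, hA, transpose_one, det_one, mul_one]

theorem permMatrix_mem_unitaryGroup {n α : Type*} [Fintype n] [DecidableEq n] [CommRing α]
    [StarRing α] (σ : Equiv.Perm n) : σ.permMatrix α ∈ unitaryGroup n α := by
  rw [mem_unitaryGroup_iff', star_eq_conjTranspose, conjTranspose_permMatrix, ← permMatrix_mul,
    mul_inv_cancel, permMatrix_one]

theorem conjTranspose_mul_self_submatrix_of_mem_unitaryGroup {n κ α : Type*} [Fintype n]
    [DecidableEq n] [DecidableEq κ] [CommRing α] [StarRing α] {U : Matrix n n α}
    (hU : U ∈ unitaryGroup n α) {c : κ → n} (hc : Function.Injective c) :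
    (U.submatrix id c)ᴴ * U.submatrix id c = 1 := by
  rw [conjTranspose_submatrix, ← submatrix_mul _ _ _ _ _ Function.bijective_id,
    ← star_eq_conjTranspose, mem_unitaryGroup_iff'.mp hU, submatrix_one _ hc]

theorem sum_norm_det_submatrix_sq_of_mem_unitaryGroup {n κ 𝕜 : Type*} [Fintype n]
    [DecidableEq n] [Fintype κ] [DecidableEq κ] [RCLike 𝕜] {U : Matrix n n 𝕜}
    (hU : U ∈ unitaryGroup n 𝕜) {c : κ → n} (hc : Function.Injective c) :
    ∑ f : κ → n, ‖(U.submatrix f c).det‖ ^ 2 = (Fintype.card κ).factorial := by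
  simpa only [submatrix_submatrix, Function.id_comp, Function.comp_id] using
    sum_norm_det_submatrix_sq _ (conjTranspose_mul_self_submatrix_of_mem_unitaryGroup hU hc)

end Matrix

namespace RandomImmanants

instance (N : ℕ) : BorelSpace (Matrix (Fin N) (Fin N) ℂ) :=
  inferInstanceAs (BorelSpace (Fin N → Fin N → ℂ))

section UnitaryGroup

variable {N : ℕ} (μ : Measure (Matrix.unitaryGroup (Fin N) ℂ))

theorem integral_submatrix_perm_rows {E : Type*} [NormedAddCommGroup E] [NormedSpace ℝ E]
    [μ.IsMulLeftInvariant] (σ : Equiv.Perm (Fin N)) (F : Matrix (Fin N) (Fin N) ℂ → E) :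
    ∫ U, F ((U : Matrix (Fin N) (Fin N) ℂ).submatrix σ id) ∂μ = ∫ U, F U ∂μ := by
  simpa [PEquiv.toMatrix_toPEquiv_mul] using
    integral_mul_left_eq_self (μ := μ) (fun U => F U) ⟨_, Matrix.permMatrix_mem_unitaryGroup σ⟩

theorem integrable_norm_det_submatrix_sq [IsFiniteMeasure μ] {κ : Type*} [Fintype κ]
    [DecidableEq κ] (r c : κ → Fin N) (hc : Function.Injective c) :
    Integrable (fun U : Matrix.unitaryGroup (Fin N) ℂ =>
      ‖((U : Matrix (Fin N) (Fin N) ℂ).submatrix r c).det‖ ^ 2) μ := by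
  refine Integrable.of_bound (Continuous.aestronglyMeasurable (by fun_prop))
    (Fintype.card κ).factorial (Filter.Eventually.of_forall fun U => ?_)
  rw [norm_pow, norm_norm, ← Matrix.sum_norm_det_submatrix_sq_of_mem_unitaryGroup U.2 hc]
  exact single_le_sum (f := fun f => ‖((U : Matrix (Fin N) (Fin N) ℂ).submatrix f c).det‖ ^ 2)
    (fun _ _ => by positivity) (mem_univ r)

theorem integral_norm_det_submatrix_sq_eq [μ.IsMulLeftInvariant] {κ : Type*} [Fintype κ]
    [DecidableEq κ] {r r' : κ → Fin N} (hr : Function.Injective r) (hr' : Function.Injective r')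
    (c : κ → Fin N) :
    ∫ U, ‖((U : Matrix (Fin N) (Fin N) ℂ).submatrix r c).det‖ ^ 2 ∂μ
      = ∫ U, ‖((U : Matrix (Fin N) (Fin N) ℂ).submatrix r' c).det‖ ^ 2 ∂μ := by
  obtain ⟨σ, hσ⟩ := Equiv.Perm.exists_extending_pair r' r hr' hr
  obtain rfl : r = σ ∘ r' := funext fun a => (hσ a).symm
  exact integral_submatrix_perm_rows μ σ fun M => ‖(M.submatrix r' c).det‖ ^ 2

theorem descFactorial_mul_integral_norm_det_submatrix_sq [μ.IsMulLeftInvariant]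
    [IsProbabilityMeasure μ] {κ : Type*} [Fintype κ] [DecidableEq κ] {r c : κ → Fin N}
    (hr : Function.Injective r) (hc : Function.Injective c) :
    (N.descFactorial (Fintype.card κ) : ℝ)
        * ∫ U, ‖((U : Matrix (Fin N) (Fin N) ℂ).submatrix r c).det‖ ^ 2 ∂μ
      = (Fintype.card κ).factorial := by
  classical
  set I := ∫ U, ‖((U : Matrix (Fin N) (Fin N) ℂ).submatrix r c).det‖ ^ 2 ∂μ
  have h_term (f : κ → Fin N) :
      ∫ U, ‖((U : Matrix (Fin N) (Fin N) ℂ).submatrix f c).det‖ ^ 2 ∂μ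
        = if Function.Injective f then I else 0 := by
    split_ifs with hf
    · exact integral_norm_det_submatrix_sq_eq μ hf hr c
    · obtain ⟨a, b, hab, hne⟩ := Function.not_injective_iff.mp hf
      have h_det (U : Matrix (Fin N) (Fin N) ℂ) : (U.submatrix f c).det = 0 :=
        Matrix.det_zero_of_row_eq hne (funext fun j => congrArg (U · (c j)) hab)
      simp [h_det]
  have h_card : #{f : κ → Fin N | Function.Injective f} = N.descFactorial (Fintype.card κ) := by
    rw [← Fintype.card_subtype, Fintype.card_congr (Equiv.subtypeInjectiveEquivEmbedding _ _),
      Fintype.card_embedding_eq, Fintype.card_fin]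
  calc (N.descFactorial (Fintype.card κ) : ℝ) * I
      = ∑ f : κ → Fin N, ∫ U, ‖((U : Matrix (Fin N) (Fin N) ℂ).submatrix f c).det‖ ^ 2 ∂μ := by
        simp_rw [h_term, sum_ite, sum_const_zero, add_zero, sum_const, h_card, nsmul_eq_mul]
    _ = ∫ U, ∑ f : κ → Fin N, ‖((U : Matrix (Fin N) (Fin N) ℂ).submatrix f c).det‖ ^ 2 ∂μ :=
        (integral_finsetSum _ fun f _ => integrable_norm_det_submatrix_sq μ f c hc).symm
    _ = (Fintype.card κ).factorial := by
        simp_rw [Matrix.sum_norm_det_submatrix_sq_of_mem_unitaryGroup (Subtype.prop _) hc]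
        simp

end UnitaryGroup

theorem subBlock_eq_submatrix {n N : ℕ} {R : Type*} [Zero R] (h : n ≤ N)
    (U : Matrix (Fin N) (Fin N) R) :
    subBlock n N U = U.submatrix (Fin.castLE h) (Fin.castLE h) := by
  ext i j
  simp [subBlock, i.isLt.trans_le h, j.isLt.trans_le h, Fin.castLE]

theorem determinant_sq_avg_unitary_general (n N : ℕ) (hnN : n ≤ N)
    (μ : Measure (Matrix.unitaryGroup (Fin N) ℂ))
    [μ.IsHaarMeasure] [IsProbabilityMeasure μ] :
    ∫ U, ‖Matrix.det (subBlock n N (U : Matrix (Fin N) (Fin N) ℂ))‖ ^ 2 ∂μ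
      = ((n.factorial : ℝ) * ((N - n).factorial : ℝ)) / (N.factorial : ℝ) := by
  have h_avg := descFactorial_mul_integral_norm_det_submatrix_sq μ
    (Fin.castLE_injective hnN) (Fin.castLE_injective hnN)
  rw [Fintype.card_fin] at h_avg
  have h_desc : (N.descFactorial n : ℝ) ≠ 0 := by
    exact_mod_cast Nat.descFactorial_eq_zero_iff_lt.not.mpr hnN.not_gt
  have h_fact : ((N - n).factorial : ℝ) * N.descFactorial n = N.factorial := by
    exact_mod_cast Nat.factorial_mul_descFactorial hnN
  simp_rw [subBlock_eq_submatrix hnN]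
  rw [← h_fact, ← h_avg]
  field_simp

/-- For `1 ≤ n ≤ N` and `U` Haar-distributed in the unitary group `U(N)`,
the average of `|Det_n(U)|²` (the determinant of the upper-left `n × n` block) equals
`n!(N-n)!/N!`. -/
theorem determinant_sq_avg_unitary (n N : ℕ) (hn : 1 ≤ n) (hnN : n ≤ N)
    (μ : Measure (Matrix.unitaryGroup (Fin N) ℂ))
    [μ.IsHaarMeasure] [IsProbabilityMeasure μ] :
    ∫ U, ‖Matrix.det (subBlock n N (U : Matrix (Fin N) (Fin N) ℂ))‖ ^ 2 ∂μ
      = ((n.factorial : ℝ) * ((N - n).factorial : ℝ)) / (N.factorial : ℝ) :=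
  determinant_sq_avg_unitary_general n N hnN μ

end RandomImmanants
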